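/- arXiv:1006.2050 — 2 statements merged into one kernel-verified Lean document; each statement's English description precedes it below -/
import Mathlib

section
/- For every integer N ≥ 2, with positive probability the final configuration (time 1) of the N-parameter frozen percolation process on the square lattice contains an open cluster of diameter exactly 2N − 1; such a cluster can be obtained by the merging of two clusters of diameter N − 1 each. -/
open MeasureTheory ProbabilityTheory Filter Set
open scoped ENNReal

/-!
Fix the horizontal segment `W` from `(0,0)` to `(2N-1,0)` and its middle edge `m`, joining
`(N-1,0)` to `(N,0)`. With positive probability, every edge of `W` other than `m` has label
`< 1/3`, `m` has label in `(1/3, 2/3)`, and every other edge touching `W` has label `> 2/3`;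
only finitely many independent labels are involved. On this event the process is forced: the
two halves of `W`, of diameter `N - 1`, open first and are isolated, so `m` opens at time
`τ m` and merges them; at that moment the cluster of `W` has diameter `2N - 1 ≥ N`, so no
edge touching `W` opens afterwards and `W` is a cluster of the final configuration.
-/

namespace Frozen

/-- Vertices of the square lattice. -/
abbrev V : Type := ℤ × ℤ

/-- Nearest-neighbour adjacency on `ℤ²`. -/
def adj (v w : V) : Prop := |v.1 - w.1| + |v.2 - w.2| = 1

/-- Edges of the square lattice, oriented rightwards or upwards so that each
(unordered) nearest-neighbour edge is represented exactly once. -/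
def Edge : Type := {e : V × V // e.2 = e.1 + (1, 0) ∨ e.2 = e.1 + (0, 1)}

/-- `e` is the edge with endpoints `x` and `y`. -/
def EdgeOf (x y : V) (e : Edge) : Prop := e.1 = (x, y) ∨ e.1 = (y, x)

/-- Connectivity via a set `A` of edges. -/
def ConnIn (A : Set Edge) : V → V → Prop :=
  Relation.ReflTransGen (fun x y => ∃ e ∈ A, EdgeOf x y e)

/-- The cluster of `v` in the graph whose open edges are `A`. -/
def cluster (A : Set Edge) (v : V) : Set V := {w | ConnIn A v w}

/-- Distance on the lattice: `|v - w| = max(|v₁-w₁|, |v₂-w₂|)`. -/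
def vdist (v w : V) : ℕ := max (v.1 - w.1).natAbs (v.2 - w.2).natAbs

/-- Diameter of a set of vertices, `sup {|v-w| : v,w ∈ W}`, as an extended real. -/
noncomputable def diam (W : Set V) : ℝ≥0∞ :=
  ⨆ v ∈ W, ⨆ w ∈ W, (vdist v w : ℝ≥0∞)

/-- `F` (the set of edges that ever open) is a realization of the `N`-parameter frozen
percolation process with edge labels `τ`: an edge `e` opens (at time `τ e`) iff at that time
neither of its endpoints lies in an open cluster of diameter `≥ N`, where the edges open just
before time `τ e` are those `f ∈ F` with `τ f < τ e`. -/
def IsFrozenEvolution (N : ℕ) (τ : Edge → ℝ) (F : Set Edge) : Prop :=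
  ∀ e : Edge, e ∈ F ↔
    (diam (cluster {f ∈ F | τ f < τ e} e.1.1) < N ∧
     diam (cluster {f ∈ F | τ f < τ e} e.1.2) < N)

/-- Embedding of lattice vertices in the plane. -/
def toR2 (v : V) : ℝ × ℝ := ((v.1 : ℝ), (v.2 : ℝ))

/-- Embedding of dual lattice vertices (indexed by `ℤ²`) in the plane: `v + (1/2, 1/2)`. -/
noncomputable def dualToR2 (d : V) : ℝ × ℝ := ((d.1 : ℝ) + 1/2, (d.2 : ℝ) + 1/2)

/-- The box `B(s) = [-s/2, s/2]²` (as a region of the plane). -/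
def box (s : ℝ) : Set (ℝ × ℝ) := Icc (-s/2) (s/2) ×ˢ Icc (-s/2) (s/2)

/-- An axis-parallel rectangle `[x₁,x₂] × [y₁,y₂]`. -/
def rect (x₁ x₂ y₁ y₂ : ℝ) : Set (ℝ × ℝ) := Icc x₁ x₂ ×ˢ Icc y₁ y₂

/-- The rectangle `R`: length `(l+(b-c)/2)N`, width `εN`, whose west side is a
central subsegment of the east side of `B(cN)`. -/
def regR (b c l ε N : ℝ) : Set (ℝ × ℝ) :=
  rect (c*N/2) (c*N/2 + (l + (b - c)/2)*N) (-(ε*N)/2) (ε*N/2)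

/-- `Λ = B(bN) ∪ R`. -/
def regLam (b c l ε N : ℝ) : Set (ℝ × ℝ) := box (b*N) ∪ regR b c l ε N

/-- `Λ'`: all points of the plane at distance `≤ εN` from `Λ`
(the plane `ℝ × ℝ` carries the max-metric). -/
def regLam' (b c l ε N : ℝ) : Set (ℝ × ℝ) :=
  {p | ∃ q ∈ regLam b c l ε N, dist p q ≤ ε*N}

/-- `R'`: the leftmost part, of length `4εN`, of the rectangle of width `3εN` and
length `lN` which is the part of `Λ'` sticking out of `B((b+2ε)N)`. -/
def regR' (b ε N : ℝ) : Set (ℝ × ℝ) :=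
  rect ((b/2 + ε)*N) ((b/2 + 5*ε)*N) (-(3*ε*N/2)) (3*ε*N/2)

/-- `L₁`: the rectangle whose south side is the rightmost segment of length `εN` of the
north side of `B(cN)`, and whose north side is part of the boundary of `Λ'`. -/
def regL1 (b c ε N : ℝ) : Set (ℝ × ℝ) :=
  rect (c*N/2 - ε*N) (c*N/2) (c*N/2) ((b/2 + ε)*N)

/-- `L₂`: the mirror image of `L₁` below `B(cN)`. -/
def regL2 (b c ε N : ℝ) : Set (ℝ × ℝ) :=
  rect (c*N/2 - ε*N) (c*N/2) (-((b/2 + ε)*N)) (-(c*N/2))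

/-- A set `Γ` of vertices surrounds the vertex `v`: every infinite nearest-neighbour
path started at `v` that leaves every bounded set must meet `Γ`. -/
def Surrounds (Γ : Set V) (v : V) : Prop :=
  ∀ f : ℕ → V, f 0 = v → (∀ i, adj (f i) (f (i+1))) →
    (∀ M : ℕ, ∃ i, M ≤ vdist (f i) (0, 0)) → ∃ i, f i ∈ Γ

/-- The primal edge `e` is crossed by the dual edge between the dual vertices `d` and `d'`
(dual vertices are indexed by `ℤ²`, the dual vertex `d` sitting at `d + (1/2,1/2)`). -/
def DualCrosses (d d' : V) (e : Edge) : Prop :=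
  (d' = d + (1,0) ∧ e.1 = ((d.1+1, d.2), (d.1+1, d.2+1))) ∨
  (d = d' + (1,0) ∧ e.1 = ((d'.1+1, d'.2), (d'.1+1, d'.2+1))) ∨
  (d' = d + (0,1) ∧ e.1 = ((d.1, d.2+1), (d.1+1, d.2+1))) ∨
  (d = d' + (0,1) ∧ e.1 = ((d'.1, d'.2+1), (d'.1+1, d'.2+1)))

/-- A dual circuit `π` surrounds the vertex `v`: every infinite nearest-neighbour path
started at `v` that leaves every bounded set uses some primal edge crossed by `π`. -/
def DualSurrounds {n : ℕ} (π : ZMod n → V) (v : V) : Prop :=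
  ∀ f : ℕ → V, f 0 = v → (∀ i, adj (f i) (f (i+1))) →
    (∀ M : ℕ, ∃ i, M ≤ vdist (f i) (0, 0)) →
    ∃ i, ∃ j : ZMod n, ∃ e : Edge, EdgeOf (f i) (f (i+1)) e ∧ DualCrosses (π j) (π (j+1)) e

/-- A `t`-open lattice path (with respect to the labels `τ`). -/
def OpenPath (τ : Edge → ℝ) (t : ℝ) {k : ℕ} (p : Fin (k+1) → V) : Prop :=
  ∀ i : Fin k, ∃ e : Edge, EdgeOf (p i.castSucc) (p i.succ) e ∧ τ e < t

/-- A `t`-closed dual lattice path. -/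
def ClosedDualPath (τ : Edge → ℝ) (t : ℝ) {k : ℕ} (q : Fin (k+1) → V) : Prop :=
  ∀ i : Fin k, ∃ e : Edge, DualCrosses (q i.castSucc) (q i.succ) e ∧ t ≤ τ e

/-- A `t`-open circuit (closed path). -/
def OpenCircuit (τ : Edge → ℝ) (t : ℝ) {n : ℕ} (γ : ZMod n → V) : Prop :=
  ∀ i : ZMod n, ∃ e : Edge, EdgeOf (γ i) (γ (i+1)) e ∧ τ e < t

/-- A `t`-closed dual circuit. -/
def ClosedDualCircuit (τ : Edge → ℝ) (t : ℝ) {n : ℕ} (π : ZMod n → V) : Prop :=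
  ∀ i : ZMod n, ∃ e : Edge, DualCrosses (π i) (π (i+1)) e ∧ t ≤ τ e

/-- There is a `t`-open horizontal crossing of the rectangle `[x₁,x₂] × [y₁,y₂]`:
a `t`-open path inside the rectangle joining its left side to its right side. -/
def HorizCrossing (τ : Edge → ℝ) (t x₁ x₂ y₁ y₂ : ℝ) : Prop :=
  ∃ k : ℕ, ∃ p : Fin (k+1) → V,
    (∀ i, toR2 (p i) ∈ rect x₁ x₂ y₁ y₂) ∧ OpenPath τ t p ∧
    ((p 0).1 : ℝ) ≤ x₁ + 1 ∧ x₂ - 1 ≤ ((p (Fin.last k)).1 : ℝ)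

/-- There is a `t`-open circuit in the annulus `outer \ inner` surrounding `inner`. -/
def OpenCircuitInAnnulus (τ : Edge → ℝ) (t : ℝ) (outer inner : Set (ℝ × ℝ)) : Prop :=
  ∃ n : ℕ, 0 < n ∧ ∃ γ : ZMod n → V,
    (∀ i, toR2 (γ i) ∈ outer \ inner) ∧ OpenCircuit τ t γ ∧
    (∀ v : V, toR2 v ∈ inner → Surrounds (Set.range γ) v)

/-- There is a `t`-closed dual circuit in the annulus `outer \ inner` surrounding `inner`. -/
def ClosedDualCircuitInAnnulus (τ : Edge → ℝ) (t : ℝ) (outer inner : Set (ℝ × ℝ)) : Prop :=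
  ∃ n : ℕ, 0 < n ∧ ∃ π : ZMod n → V,
    (∀ i, dualToR2 (π i) ∈ outer \ inner) ∧ ClosedDualCircuit τ t π ∧
    (∀ v : V, toR2 v ∈ inner → DualSurrounds π v)


lemma connIn_symm {A : Set Edge} {v w : V} (h : ConnIn A v w) : ConnIn A w v := by
  induction h with
  | refl => exact .refl
  | tail _ hstep ih =>
    obtain ⟨e, he, hxy⟩ := hstep
    exact .head ⟨e, he, hxy.symm⟩ ih

lemma cluster_subset_of_forall_mem_iff {A : Set Edge} {W : Set V}
    (hW : ∀ e ∈ A, e.1.1 ∈ W ↔ e.1.2 ∈ W) {v : V} (hv : v ∈ W) : cluster A v ⊆ W := by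
  intro w hw
  induction hw with
  | refl => exact hv
  | tail _ hstep ih =>
    obtain ⟨e, he, hxy | hxy⟩ := hstep
    · exact (hxy ▸ hW e he).1 ih
    · exact (hxy ▸ hW e he).2 ih

lemma vdist_le_diam {W : Set V} {v w : V} (hv : v ∈ W) (hw : w ∈ W) :
    (vdist v w : ℝ≥0∞) ≤ diam W :=
  le_iSup₂_of_le v hv (le_iSup₂_of_le w hw le_rfl)

lemma diam_mono {W W' : Set V} (h : W ⊆ W') : diam W ≤ diam W' :=
  iSup₂_le fun _ hv => iSup₂_le fun _ hw => vdist_le_diam (h hv) (h hw)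

section Segment

def hEdge (i : ℤ) : Edge := ⟨((i, 0), (i + 1, 0)), Or.inl rfl⟩

def seg (a b : ℤ) : Set V := {v | v.2 = 0 ∧ a ≤ v.1 ∧ v.1 ≤ b}

def Touches (W : Set V) (e : Edge) : Prop := e.1.1 ∈ W ∨ e.1.2 ∈ W

def SegIsolated (A : Set Edge) (a b : ℤ) : Prop :=
  ∀ e ∈ A, Touches (seg a b) e → ∃ i ∈ Ico a b, e = hEdge i

variable {A B : Set Edge} {a b c d : ℤ}

@[simp] lemma hEdge_fst (i : ℤ) : (hEdge i).1.1 = (i, 0) := rfl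

@[simp] lemma hEdge_snd (i : ℤ) : (hEdge i).1.2 = (i + 1, 0) := rfl

lemma mem_seg {v : V} : v ∈ seg a b ↔ v.2 = 0 ∧ a ≤ v.1 ∧ v.1 ≤ b := Iff.rfl

lemma touches_seg_hEdge_bounds {i : ℤ} (h : Touches (seg a b) (hEdge i)) :
    a ≤ i + 1 ∧ i ≤ b := by
  simp only [Touches, hEdge_fst, hEdge_snd, mem_seg, true_and] at h
  omega

lemma touches_seg_hEdge {i : ℤ} (hi : i ∈ Ico a b) : Touches (seg a b) (hEdge i) :=
  .inl ⟨rfl, hi.1, hi.2.le⟩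

lemma touches_mono {W W' : Set V} {e : Edge} (h : W ⊆ W') (he : Touches W e) : Touches W' e :=
  he.imp (@h _) (@h _)

lemma seg_subset_seg (hac : a ≤ c) (hdb : d ≤ b) : seg c d ⊆ seg a b :=
  fun _ ⟨h₀, h₁, h₂⟩ => ⟨h₀, hac.trans h₁, h₂.trans hdb⟩

lemma seg_union_seg (hac : a ≤ c) (hcb : c ≤ b + 1) : seg a (c - 1) ∪ seg c b = seg a b := by
  ext ⟨x, y⟩
  simp only [mem_union, mem_seg]
  omega

lemma diam_seg (hab : a ≤ b) : diam (seg a b) = (b - a).toNat := by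
  refine le_antisymm (iSup₂_le fun v hv => iSup₂_le fun w hw => ?_) ?_
  · obtain ⟨hv₀, hv₁, hv₂⟩ := hv
    obtain ⟨hw₀, hw₁, hw₂⟩ := hw
    exact Nat.cast_le.2 (by simp only [vdist, hv₀, hw₀]; omega)
  · have hdist : vdist (a, 0) (b, 0) = (b - a).toNat := by simp only [vdist]; omega
    exact hdist ▸ vdist_le_diam ⟨rfl, le_rfl, hab⟩ ⟨rfl, hab, le_rfl⟩

lemma connIn_of_hEdge_mem (hA : ∀ i ∈ Ico a b, hEdge i ∈ A) :
    ∀ x, a ≤ x → x ≤ b → ConnIn A (a, 0) (x, 0) := by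
  intro x hax
  induction x, hax using Int.leInduction with
  | base => exact fun _ => .refl
  | succ x hax ih =>
    exact fun hxb => (ih (by omega)).tail ⟨hEdge x, hA x ⟨hax, by omega⟩, Or.inl rfl⟩

lemma seg_subset_cluster (hA : ∀ i ∈ Ico a b, hEdge i ∈ A) {v : V} (hv : v ∈ seg a b) :
    seg a b ⊆ cluster A v := by
  intro w hw
  obtain ⟨hv₀, hv₁, hv₂⟩ := hv
  obtain ⟨hw₀, hw₁, hw₂⟩ := hw
  have hav : ConnIn A (a, 0) v := hv₀ ▸ connIn_of_hEdge_mem hA v.1 hv₁ hv₂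
  have haw : ConnIn A (a, 0) w := hw₀ ▸ connIn_of_hEdge_mem hA w.1 hw₁ hw₂
  exact (connIn_symm hav).trans haw

namespace SegIsolated

lemma mono (h : SegIsolated A a b) (hBA : B ⊆ A) : SegIsolated B a b :=
  fun e he => h e (hBA he)

lemma cluster_subset (h : SegIsolated A a b) {v : V} (hv : v ∈ seg a b) :
    cluster A v ⊆ seg a b := by
  refine cluster_subset_of_forall_mem_iff (fun e he => ?_) hv
  by_cases hte : Touches (seg a b) e
  · obtain ⟨i, ⟨hai, hib⟩, rfl⟩ := h e he hte
    simp only [hEdge_fst, hEdge_snd, mem_seg, true_and]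
    omega
  · exact ⟨fun h₁ => (hte (.inl h₁)).elim, fun h₂ => (hte (.inr h₂)).elim⟩

lemma cluster_eq (h : SegIsolated A a b) (hA : ∀ i ∈ Ico a b, hEdge i ∈ A) {v : V}
    (hv : v ∈ seg a b) : cluster A v = seg a b :=
  (h.cluster_subset hv).antisymm (seg_subset_cluster hA hv)

lemma left (h : SegIsolated A a b) (hc : hEdge c ∉ A) (hcb : c ≤ b) : SegIsolated A a c := by
  intro e he hte
  obtain ⟨i, ⟨hai, -⟩, rfl⟩ := h e he (touches_mono (seg_subset_seg le_rfl hcb) hte)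
  have hic : i ≠ c := by rintro rfl; exact hc he
  exact ⟨i, ⟨hai, by have := touches_seg_hEdge_bounds hte; omega⟩, rfl⟩

lemma right (h : SegIsolated A a b) (hc : hEdge (c - 1) ∉ A) (hac : a ≤ c) :
    SegIsolated A c b := by
  intro e he hte
  obtain ⟨i, ⟨-, hib⟩, rfl⟩ := h e he (touches_mono (seg_subset_seg hac le_rfl) hte)
  have hic : i ≠ c - 1 := by rintro rfl; exact hc he
  exact ⟨i, ⟨by have := touches_seg_hEdge_bounds hte; omega, hib⟩, rfl⟩

end SegIsolated

lemma finite_setOf_touches_seg (a b : ℤ) : {e : Edge | Touches (seg a b) e}.Finite := by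
  set S : Set V := Icc (a - 1) (b + 1) ×ˢ Icc (-1) 1
  have hS : (S ×ˢ S).Finite := ((finite_Icc _ _).prod (finite_Icc _ _)).prod
    ((finite_Icc _ _).prod (finite_Icc _ _))
  refine (hS.preimage Subtype.val_injective.injOn).subset ?_
  rintro ⟨⟨⟨x₁, x₂⟩, ⟨y₁, y₂⟩⟩, hxy⟩ (hte : Touches (seg a b) _)
  simp only [Touches, mem_seg] at hte
  simp only [Prod.ext_iff, Prod.fst_add, Prod.snd_add] at hxy
  simp only [S, mem_preimage, mem_prod, mem_Icc]
  omega

end Segment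

section MergingEvent

structure MergeLabels (N : ℕ) (t : ℝ) (τ : Edge → ℝ) : Prop where
  path_lt_mid : ∀ i ∈ Ico 0 (2 * (N : ℤ) - 1), i ≠ N - 1 → τ (hEdge i) < τ (hEdge (N - 1))
  mid_lt : τ (hEdge (N - 1)) < t
  lt_boundary : ∀ e, Touches (seg 0 (2 * N - 1)) e →
    (∀ i ∈ Ico 0 (2 * (N : ℤ) - 1), e ≠ hEdge i) → t < τ e

variable {N : ℕ} {t : ℝ} {τ : Edge → ℝ} {F : Set Edge}

namespace MergeLabels

lemma path_le_mid (hτ : MergeLabels N t τ) {i : ℤ} (hi : i ∈ Ico 0 (2 * (N : ℤ) - 1)) :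
    τ (hEdge i) ≤ τ (hEdge (N - 1)) := by
  rcases eq_or_ne i (N - 1) with rfl | hne
  · exact le_rfl
  · exact (hτ.path_lt_mid i hi hne).le

lemma path_lt (hτ : MergeLabels N t τ) {i : ℤ} (hi : i ∈ Ico 0 (2 * (N : ℤ) - 1)) :
    τ (hEdge i) < t :=
  (hτ.path_le_mid hi).trans_lt hτ.mid_lt

lemma segIsolated (hτ : MergeLabels N t τ) {A : Set Edge} (hA : ∀ f ∈ A, τ f ≤ t) :
    SegIsolated A 0 (2 * N - 1) := by
  intro e he hte
  by_contra! hpath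
  exact (hA e he).not_gt (hτ.lt_boundary e hte hpath)

end MergeLabels

lemma diam_seg_path (hN : 1 ≤ N) : diam (seg 0 (2 * N - 1)) = ((2 * N - 1 : ℕ) : ℝ≥0∞) := by
  rw [diam_seg (by omega)]; congr 1; omega

lemma diam_seg_left_half (hN : 1 ≤ N) : diam (seg 0 (N - 1)) = ((N - 1 : ℕ) : ℝ≥0∞) := by
  rw [diam_seg (by omega)]; congr 1; omega

lemma diam_seg_right_half (hN : 1 ≤ N) : diam (seg N (2 * N - 1)) = ((N - 1 : ℕ) : ℝ≥0∞) := by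
  rw [diam_seg (by omega)]; congr 1; omega

lemma diam_cluster_lt_of_segIsolated (hN : 1 ≤ N) {A : Set Edge}
    (hA : SegIsolated A 0 (2 * N - 1)) (hm : hEdge (N - 1) ∉ A) {v : V}
    (hv : v ∈ seg 0 (2 * N - 1)) : diam (cluster A v) < N := by
  have hhalf : ((N - 1 : ℕ) : ℝ≥0∞) < N := by exact_mod_cast Nat.sub_lt hN Nat.one_pos
  rcases le_or_gt v.1 (N - 1) with hvN | hvN
  · have hsub := (hA.left hm (by omega)).cluster_subset ⟨hv.1, hv.2.1, hvN⟩
    exact ((diam_mono hsub).trans_eq (diam_seg_left_half hN)).trans_lt hhalf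
  · have hsub := (hA.right (c := N) hm (by omega)).cluster_subset ⟨hv.1, by omega, hv.2.2⟩
    exact ((diam_mono hsub).trans_eq (diam_seg_right_half hN)).trans_lt hhalf

variable (hF : IsFrozenEvolution N τ F) (hτ : MergeLabels N t τ) (hN : 1 ≤ N)
include hF hτ hN

/-- Until time `τ (hEdge (N - 1))` the two halves of the path are isolated from each other and
from the rest of the lattice, so their clusters stay small. -/
lemma hEdge_mem {i : ℤ} (hi : i ∈ Ico 0 (2 * (N : ℤ) - 1)) : hEdge i ∈ F := by
  set A := {f ∈ F | τ f < τ (hEdge i)}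
  have hA : SegIsolated A 0 (2 * N - 1) :=
    hτ.segIsolated fun f hf => (hf.2.trans (hτ.path_lt hi)).le
  have hm : hEdge (N - 1) ∉ A := fun hm => (hτ.path_le_mid hi).not_gt hm.2
  obtain ⟨hi₀, hi₁⟩ := hi
  have h₁ : ((i, 0) : V) ∈ seg 0 (2 * N - 1) := ⟨rfl, hi₀, by omega⟩
  have h₂ : ((i + 1, 0) : V) ∈ seg 0 (2 * N - 1) := ⟨rfl, by omega, by omega⟩
  exact (hF _).2 ⟨diam_cluster_lt_of_segIsolated hN hA hm h₁,
    diam_cluster_lt_of_segIsolated hN hA hm h₂⟩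

/-- By the time any other edge touching the path could open, the whole path, of diameter
`2N - 1 ≥ N`, is open. -/
lemma segIsolated_final : SegIsolated F 0 (2 * N - 1) := by
  intro e he hte
  by_contra! hpath
  set A := {f ∈ F | τ f < τ e}
  have hpathA : ∀ i ∈ Ico 0 (2 * (N : ℤ) - 1), hEdge i ∈ A := fun i hi =>
    ⟨hEdge_mem hF hτ hN hi, (hτ.path_lt hi).trans (hτ.lt_boundary e hte hpath)⟩
  obtain ⟨x, hx, hsmall⟩ : ∃ x ∈ seg 0 (2 * N - 1), diam (cluster A x) < N := by
    obtain ⟨h₁, h₂⟩ := (hF e).1 he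
    rcases hte with hx | hx
    exacts [⟨_, hx, h₁⟩, ⟨_, hx, h₂⟩]
  have hbig : ((2 * N - 1 : ℕ) : ℝ≥0∞) ≤ diam (cluster A x) :=
    (diam_seg_path hN).symm.trans_le (diam_mono (seg_subset_cluster hpathA hx))
  exact hsmall.not_ge ((Nat.cast_le.2 (by omega)).trans hbig)

theorem exists_merged_cluster :
    ∃ v : V, diam (cluster F v) = ((2 * N - 1 : ℕ) : ℝ≥0∞) ∧
      ∃ e ∈ F, v ∈ cluster F e.1.1 ∧
        diam (cluster {f ∈ F | τ f < τ e} e.1.1) = ((N - 1 : ℕ) : ℝ≥0∞) ∧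
        diam (cluster {f ∈ F | τ f < τ e} e.1.2) = ((N - 1 : ℕ) : ℝ≥0∞) ∧
        cluster F v = cluster {f ∈ F | τ f < τ e} e.1.1 ∪ cluster {f ∈ F | τ f < τ e} e.1.2 := by
  have hmid : ((N : ℤ) - 1) ∈ Ico 0 (2 * (N : ℤ) - 1) := ⟨by omega, by omega⟩
  set A := {f ∈ F | τ f < τ (hEdge (N - 1))}
  have hA : SegIsolated A 0 (2 * N - 1) := (segIsolated_final hF hτ hN).mono fun _ hf => hf.1
  have hm : hEdge (N - 1) ∉ A := fun hm => lt_irrefl _ hm.2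
  have hpathA : ∀ i ∈ Ico 0 (2 * (N : ℤ) - 1), i ≠ N - 1 → hEdge i ∈ A := fun i hi hne =>
    ⟨hEdge_mem hF hτ hN hi, hτ.path_lt_mid i hi hne⟩
  have hF0 : cluster F (0, 0) = seg 0 (2 * N - 1) :=
    (segIsolated_final hF hτ hN).cluster_eq (fun i hi => hEdge_mem hF hτ hN hi) ⟨rfl, le_rfl, by omega⟩
  have hleft : cluster A (N - 1, 0) = seg 0 (N - 1) :=
    (hA.left hm (by omega)).cluster_eq (fun i ⟨hi₀, hi₁⟩ => hpathA i ⟨hi₀, by omega⟩ (by omega))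
      ⟨rfl, by omega, le_rfl⟩
  have hright : cluster A (N - 1 + 1, 0) = seg N (2 * N - 1) := by
    rw [sub_add_cancel]
    exact (hA.right (c := N) hm (by omega)).cluster_eq
      (fun i ⟨hi₀, hi₁⟩ => hpathA i ⟨by omega, hi₁⟩ (by omega)) ⟨rfl, le_rfl, by omega⟩
  refine ⟨(0, 0), hF0 ▸ diam_seg_path hN, hEdge (N - 1), hEdge_mem hF hτ hN hmid, ?_, ?_, ?_, ?_⟩
  · have h0 : (((N : ℤ) - 1, 0) : V) ∈ cluster F (0, 0) := hF0 ▸ ⟨rfl, by omega, by omega⟩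
    exact connIn_symm h0
  · exact (congrArg diam hleft).trans (diam_seg_left_half hN)
  · exact (congrArg diam hright).trans (diam_seg_right_half hN)
  · exact hF0.trans ((congrArg₂ (· ∪ ·) hleft hright).trans
      (seg_union_seg (by omega) (by omega))).symm

end MergingEvent

open Classical in
noncomputable def labelWindow (N : ℕ) (e : Edge) : Set ℝ :=
  if e = hEdge (N - 1) then Ioo (1 / 3) (2 / 3)
  else if ∃ i ∈ Ico 0 (2 * (N : ℤ) - 1), e = hEdge i then Ioo 0 (1 / 3)
  else Ioo (2 / 3) 1

lemma measurableSet_labelWindow (N : ℕ) (e : Edge) : MeasurableSet (labelWindow N e) := by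
  unfold labelWindow
  split_ifs <;> exact measurableSet_Ioo

lemma labelWindow_subset (N : ℕ) (e : Edge) : labelWindow N e ⊆ Ioo 0 1 := by
  unfold labelWindow
  split_ifs <;> exact Ioo_subset_Ioo (by norm_num) (by norm_num)

lemma volume_labelWindow_pos (N : ℕ) (e : Edge) : 0 < volume (labelWindow N e) := by
  unfold labelWindow
  split_ifs <;> simp only [Real.volume_Ioo, ENNReal.ofReal_pos] <;> norm_num

lemma mergeLabels_of_mem_labelWindow {N : ℕ} {τ : Edge → ℝ} (hτ : ∀ e, Touches (seg 0 (2 * N - 1)) e →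
    τ e ∈ labelWindow N e) (hN : 1 ≤ N) : MergeLabels N (2 / 3) τ := by
  have hmid : τ (hEdge (N - 1)) ∈ Ioo (1 / 3) (2 / 3) := by
    have := hτ (hEdge (N - 1)) (touches_seg_hEdge ⟨by omega, by omega⟩)
    rwa [labelWindow, if_pos rfl] at this
  refine ⟨fun i hi hne => ?_, hmid.2, fun e hte hpath => ?_⟩
  · have := hτ (hEdge i) (touches_seg_hEdge hi)
    rw [labelWindow, if_neg (fun h => hne (by simpa using congrArg (·.1.1.1) h)),
      if_pos ⟨i, hi, rfl⟩] at this
    exact this.2.trans hmid.1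
  · have := hτ e hte
    rw [labelWindow, if_neg (fun h => hpath _ ⟨by omega, by omega⟩ h), if_neg (by simpa using hpath)]
      at this
    exact this.1

lemma measure_iInter_preimage_pos {Ω ι β : Type*} [MeasurableSpace Ω] [MeasurableSpace β]
    {P : Measure Ω} {X : ι → Ω → β} (hindep : iIndepFun X P) (S : Finset ι) {I : ι → Set β}
    (hI : ∀ i ∈ S, MeasurableSet (I i)) (hpos : ∀ i ∈ S, 0 < P.map (X i) (I i)) :
    0 < P (⋂ i ∈ S, X i ⁻¹' I i) := by
  rw [hindep.measure_inter_preimage_eq_mul S hI]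
  refine CanonicallyOrderedAdd.prod_pos.2 fun i hi => ?_
  -- a law that charges `I i` is nonzero, so `X i` is a.e.-measurable
  have hX : AEMeasurable (X i) P := .of_map_ne_zero fun h => by simpa [h] using hpos i hi
  simpa [Measure.map_apply_of_aemeasurable hX (hI i hi)] using hpos i hi

theorem statement3_general
    {Ω : Type} [MeasurableSpace Ω] (P : Measure Ω)
    (τ : Edge → Ω → ℝ)
    (hindep : iIndepFun τ P)
    (hlaw : ∀ e, P.map (τ e) = MeasureTheory.volume.restrict (Set.Ioo (0:ℝ) 1))
    (N : ℕ) (hN : 2 ≤ N)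
    (F : Ω → Set Edge)
    (hF : ∀ᵐ ω ∂P, IsFrozenEvolution N (fun e => τ e ω) (F ω)) :
    0 < P {ω | ∃ v : V, diam (cluster (F ω) v) = ((2 * N - 1 : ℕ) : ℝ≥0∞) ∧
      ∃ e ∈ F ω, v ∈ cluster (F ω) e.1.1 ∧
        diam (cluster {f ∈ F ω | τ f ω < τ e ω} e.1.1) = ((N - 1 : ℕ) : ℝ≥0∞) ∧
        diam (cluster {f ∈ F ω | τ f ω < τ e ω} e.1.2) = ((N - 1 : ℕ) : ℝ≥0∞) ∧
        cluster (F ω) v =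
          cluster {f ∈ F ω | τ f ω < τ e ω} e.1.1 ∪ cluster {f ∈ F ω | τ f ω < τ e ω} e.1.2} := by
  set S := (finite_setOf_touches_seg 0 (2 * N - 1)).toFinset
  have hgood : 0 < P (⋂ e ∈ S, τ e ⁻¹' labelWindow N e) := by
    refine measure_iInter_preimage_pos hindep S (fun e _ => measurableSet_labelWindow N e)
      fun e _ => ?_
    rw [hlaw, Measure.restrict_apply' measurableSet_Ioo, inter_eq_left.2 (labelWindow_subset N e)]
    exact volume_labelWindow_pos N e
  refine hgood.trans_le (measure_mono_ae ?_)
  filter_upwards [hF] with ω hω hgood_ω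
  have hwindow : ∀ e, Touches (seg 0 (2 * N - 1)) e → τ e ω ∈ labelWindow N e := fun e he =>
    mem_iInter₂.1 hgood_ω e (by simpa [S] using he)
  exact exists_merged_cluster hω (mergeLabels_of_mem_labelWindow hwindow (by omega)) (by omega)

/-- For every `N ≥ 2`, with positive probability the final configuration of the
`N`-parameter frozen percolation process contains an open cluster of diameter exactly `2N - 1`,
obtained by the merging (through an edge `e`, at time `τ e`) of two clusters of diameter
`N - 1` each. -/
theorem statement3
    {Ω : Type} [MeasurableSpace Ω] (P : Measure Ω) [IsProbabilityMeasure P]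
    (τ : Edge → Ω → ℝ) (hmeas : ∀ e, Measurable (τ e))
    (hindep : iIndepFun τ P)
    (hlaw : ∀ e, P.map (τ e) = MeasureTheory.volume.restrict (Set.Ioo (0:ℝ) 1))
    (N : ℕ) (hN : 2 ≤ N)
    (F : Ω → Set Edge)
    (hF : ∀ᵐ ω ∂P, IsFrozenEvolution N (fun e => τ e ω) (F ω)) :
    0 < P {ω | ∃ v : V, diam (cluster (F ω) v) = ((2 * N - 1 : ℕ) : ℝ≥0∞) ∧
      ∃ e ∈ F ω, v ∈ cluster (F ω) e.1.1 ∧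
        diam (cluster {f ∈ F ω | τ f ω < τ e ω} e.1.1) = ((N - 1 : ℕ) : ℝ≥0∞) ∧
        diam (cluster {f ∈ F ω | τ f ω < τ e ω} e.1.2) = ((N - 1 : ℕ) : ℝ≥0∞) ∧
        cluster (F ω) v =
          cluster {f ∈ F ω | τ f ω < τ e ω} e.1.1 ∪ cluster {f ∈ F ω | τ f ω < τ e ω} e.1.2} :=
  statement3_general P τ hindep hlaw N hN F hF

end Frozen
end

section
/- For every finite N and every dimension d ≥ 1, the N-parameter frozen percolation process on ℤ^d exists: for almost every realization of the i.i.d. Uniform(0,1) edge labels (τ_e), there is a unique assignment of opening times consistent with the rule that each edge e becomes open at time τ_e unless at that time at least one of its endpoints belongs to an open cluster of diameter ≥ N, in which case e remains closed forever. -/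
/-!
Whether an edge `e` opens is decided by the open edges of smaller label in the `N`-balls around
its endpoints, because a cluster of diameter `< N` grown inside such a ball cannot leave it.
Hence the rule defines the set of opened edges by well-founded recursion along the relation
"`f` is near `e` and `τ f < τ e`", uniquely, as soon as this relation is well founded. Each edge
has at most `C` near edges, so at most `C ^ n` near-chains of length `n` start at a given edge, and
by exchangeability of i.i.d. labels each of them is strictly decreasing with probability at most
`1 / (n + 1)!`. As `C ^ n / (n + 1)! → 0`, almost surely no edge starts an infinite descending
chain.
-/

open MeasureTheory ProbabilityTheory Filter Set
open scoped ENNReal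

namespace FrozenD

/-- Vertices of the lattice `ℤ^d`. -/
abbrev Vd (d : ℕ) : Type := Fin d → ℤ

/-- Nearest-neighbour edges of `ℤ^d`, oriented in the positive coordinate directions so that
each (unordered) edge is represented exactly once. -/
def EdgeD (d : ℕ) : Type :=
  {e : Vd d × Vd d // ∃ i : Fin d, e.2 = Function.update e.1 i (e.1 i + 1)}

/-- `e` is the edge with endpoints `x` and `y`. -/
def EdgeOfD {d : ℕ} (x y : Vd d) (e : EdgeD d) : Prop := e.1 = (x, y) ∨ e.1 = (y, x)

/-- Connectivity via a set `A` of edges. -/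
def ConnInD {d : ℕ} (A : Set (EdgeD d)) : Vd d → Vd d → Prop :=
  Relation.ReflTransGen (fun x y => ∃ e ∈ A, EdgeOfD x y e)

/-- The cluster of `v` in the graph whose open edges are `A`. -/
def clusterD {d : ℕ} (A : Set (EdgeD d)) (v : Vd d) : Set (Vd d) := {w | ConnInD A v w}

/-- The distance `|v - w| = max_i |v_i - w_i|`. -/
def vdistD {d : ℕ} (v w : Vd d) : ℕ := Finset.univ.sup fun i => (v i - w i).natAbs

/-- Diameter of a set of vertices, `sup {|v-w| : v,w ∈ W}`, as an extended real. -/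
noncomputable def diamD {d : ℕ} (W : Set (Vd d)) : ℝ≥0∞ :=
  ⨆ v ∈ W, ⨆ w ∈ W, (vdistD v w : ℝ≥0∞)

/-- `F` (the set of edges that ever open, i.e. the assignment of opening times: edge `e` opens
at time `τ e` if `e ∈ F` and stays closed forever otherwise) is consistent with the rule of the
`N`-parameter frozen percolation process with labels `τ`: an edge `e` opens at time `τ e` iff
at that time neither of its endpoints lies in an open cluster of diameter `≥ N`. -/
def IsFrozenEvolutionD {d : ℕ} (N : ℕ) (τ : EdgeD d → ℝ) (F : Set (EdgeD d)) : Prop :=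
  ∀ e : EdgeD d, e ∈ F ↔
    (diamD (clusterD {f ∈ F | τ f < τ e} e.1.1) < N ∧
     diamD (clusterD {f ∈ F | τ f < τ e} e.1.2) < N)

end FrozenD

open scoped Nat Topology

section Chains

variable {α : Type*} (r : α → α → Prop)

def chainsFrom (a : α) (n : ℕ) : Set (Fin (n + 1) → α) :=
  {c | c 0 = a ∧ ∀ i : Fin n, r (c i.castSucc) (c i.succ)}

variable {r}

lemma cons_mem_chainsFrom {a b : α} {n : ℕ} {c : Fin (n + 1) → α} (hab : r a b)
    (hc : c ∈ chainsFrom r b n) : Matrix.vecCons a c ∈ chainsFrom r a (n + 1) := by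
  refine ⟨rfl, fun i => ?_⟩
  cases i using Fin.cases with
  | zero => simpa [hc.1] using hab
  | succ i => simpa [← Fin.succ_castSucc] using hc.2 i

lemma chainsFrom_succ_subset (a : α) (n : ℕ) :
    chainsFrom r a (n + 1) ⊆ ⋃ b ∈ {b | r a b}, Matrix.vecCons a '' chainsFrom r b n := by
  rintro c ⟨hc0, hc⟩
  refine mem_biUnion (x := c 1) ?_ ⟨Matrix.vecTail c, ⟨rfl, fun i => ?_⟩, ?_⟩
  · simpa [hc0] using hc 0
  · simpa [Matrix.vecTail, ← Fin.succ_castSucc] using hc i.succ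
  · rw [← hc0]
    exact Matrix.cons_head_tail c

lemma encard_chainsFrom_le {C : ℕ} (hC : ∀ a, {b | r a b}.encard ≤ C) (a : α) (n : ℕ) :
    (chainsFrom r a n).encard ≤ C ^ n := by
  induction n generalizing a with
  | zero =>
    rw [pow_zero, encard_le_one_iff]
    intro c c' hc hc'
    funext i
    rw [Fin.fin_one_eq_zero i, hc.1, hc'.1]
  | succ n ih =>
    have hfin := finite_of_encard_le_coe (hC a)
    calc (chainsFrom r a (n + 1)).encard
        ≤ (⋃ b ∈ {b | r a b}, Matrix.vecCons a '' chainsFrom r b n).encard :=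
          encard_le_encard (chainsFrom_succ_subset a n)
      _ ≤ ∑ b ∈ hfin.toFinset, (Matrix.vecCons a '' chainsFrom r b n).encard := by
          simpa only [Finite.mem_toFinset] using
            hfin.toFinset.set_encard_biUnion_le fun b => Matrix.vecCons a '' chainsFrom r b n
      _ ≤ hfin.toFinset.card • (C : ℕ∞) ^ n :=
          Finset.sum_le_card_nsmul _ _ _ fun b _ =>
            (encard_image_le (Matrix.vecCons a) _).trans (ih b)
      _ ≤ C ^ (n + 1) := by
          rw [nsmul_eq_mul, pow_succ', ← hfin.encard_eq_coe_toFinset_card]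
          gcongr
          exact hC a

lemma exists_mem_chainsFrom_flip_of_not_acc {s : α → α → Prop} {a : α} (h : ¬Acc s a) (n : ℕ) :
    ∃ c, c ∈ chainsFrom (flip s) a n := by
  induction n generalizing a with
  | zero => exact ⟨fun _ => a, rfl, fun i => i.elim0⟩
  | succ n ih =>
    obtain ⟨b, hb, hba⟩ := exists_not_acc_lt_of_not_acc h
    obtain ⟨c, hc⟩ := ih hb
    exact ⟨_, cons_mem_chainsFrom hba hc⟩

end Chains

theorem WellFounded.existsUnique_set_of_local {α : Type*} {r : α → α → Prop}
    (hr : WellFounded r) (Φ : Set α → α → Prop)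
    (hΦ : ∀ F F' e, (∀ f, r f e → (f ∈ F ↔ f ∈ F')) → (Φ F e ↔ Φ F' e)) :
    ∃! F : Set α, ∀ e, e ∈ F ↔ Φ F e := by
  let G : α → Prop := hr.fix fun e ih => Φ {f | ∃ h : r f e, ih f h} e
  have hG : ∀ e, G e ↔ Φ {f | G f} e := fun e => by
    rw [show G e = _ from hr.fix_eq _ e]
    exact hΦ _ _ e fun f hf => by simp [hf, G]
  refine ⟨{f | G f}, hG, fun F hF => ?_⟩
  ext e
  induction e using hr.induction with
  | _ e ih => exact (hF e).trans ((hΦ F _ e ih).trans (hG e).symm)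

section IIDLabels

lemma measurableSet_setOf_strictAnti (k : ℕ) : MeasurableSet {x : Fin k → ℝ | StrictAnti x} := by
  have : {x : Fin k → ℝ | StrictAnti x} =
      ⋂ (i : Fin k) (j : Fin k) (_ : i < j), {x | x j < x i} := by
    ext x
    simp [StrictAnti]
  rw [this]
  exact .iInter fun i => .iInter fun j => .iInter fun _ =>
    measurableSet_lt (measurable_pi_apply j) (measurable_pi_apply i)

lemma pi_setOf_strictAnti_le (μ : Measure ℝ) [IsProbabilityMeasure μ] (k : ℕ) :
    Measure.pi (fun _ : Fin k => μ) {x | StrictAnti x} ≤ (k ! : ℝ≥0∞)⁻¹ := by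
  set π := Measure.pi fun _ : Fin k => μ
  set S := {x : Fin k → ℝ | StrictAnti x}
  -- The `k!` sets `E σ` are pairwise disjoint and, by symmetry of `π`, all have measure `π S`.
  let E : Equiv.Perm (Fin k) → Set (Fin k → ℝ) := fun σ => {x | StrictAnti (x ∘ σ)}
  have hE : ∀ σ, E σ = MeasurableEquiv.piCongrLeft (fun _ => ℝ) σ.symm ⁻¹' S := fun σ => by
    ext x
    simp only [E, S, mem_ofPred_eq, mem_preimage]
    congr!
    funext i
    simpa using (MeasurableEquiv.piCongrLeft_apply_apply σ.symm (β := fun _ => ℝ) x (σ i)).symm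
  have hπE : ∀ σ, π (E σ) = π S := fun σ => by
    rw [hE]
    exact (measurePreserving_piCongrLeft (fun _ => μ) σ.symm).measure_preimage
      (measurableSet_setOf_strictAnti k).nullMeasurableSet
  have hdisj : Pairwise (Function.onFun Disjoint E) := fun σ σ' hne => by
    refine Set.disjoint_left.2 fun x (hx : StrictAnti (x ∘ σ)) (hx' : StrictAnti (x ∘ σ')) => hne ?_
    have hcomp : x ∘ σ = x ∘ σ' := by
      rw [← hx.range_inj hx', σ.surjective.range_comp, σ'.surjective.range_comp]
    have hinj : x.Injective := by
      simpa [Function.comp_assoc] using hx.injective.comp σ.symm.injective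
    ext i
    exact congrArg _ (hinj (congrFun hcomp i))
  have hsum : ∑ σ : Equiv.Perm (Fin k), π (E σ) ≤ 1 := by
    rw [← measure_biUnion_finset (fun σ _ σ' _ h => hdisj h) fun σ _ => hE σ ▸
      (MeasurableEquiv.piCongrLeft _ σ.symm).measurable (measurableSet_setOf_strictAnti k)]
    exact prob_le_one
  simp only [hπE, Finset.sum_const, Finset.card_univ, Fintype.card_perm, Fintype.card_fin,
    nsmul_eq_mul] at hsum
  rwa [ENNReal.le_inv_iff_mul_le, mul_comm]

variable {ι Ω : Type*} [MeasurableSpace Ω] {P : Measure Ω} {X : ι → Ω → ℝ}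

lemma measure_strictAnti_comp_le (hmeas : ∀ i, Measurable (X i)) (hindep : iIndepFun X P)
    (hident : ∀ i j, P.map (X i) = P.map (X j)) {k : ℕ} (c : Fin k → ι) :
    P {ω | StrictAnti fun i => X (c i) ω} ≤ (k ! : ℝ≥0∞)⁻¹ := by
  have := hindep.isProbabilityMeasure
  by_cases hc : c.Injective
  · rcases k with _ | k
    · exact (prob_le_one (μ := P)).trans (by simp)
    have hmap : P.map (fun ω i => X (c i) ω) = Measure.pi fun _ => P.map (X (c 0)) := by
      rw [(hindep.precomp hc).map_fun_eq_pi_map fun i => (hmeas _).aemeasurable]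
      simp_rw [hident _ (c 0)]
    have : IsProbabilityMeasure (P.map (X (c 0))) :=
      Measure.isProbabilityMeasure_map (hmeas _).aemeasurable
    refine le_of_eq_of_le ?_ (pi_setOf_strictAnti_le (P.map (X (c 0))) _)
    rw [← hmap, Measure.map_apply (measurable_pi_lambda _ fun i => hmeas _)
      (measurableSet_setOf_strictAnti _)]
    rfl
  · have : {ω | StrictAnti fun i => X (c i) ω} = ∅ :=
      eq_empty_of_forall_notMem fun ω hω =>
        hc (Function.Injective.of_comp (f := fun i => X i ω) hω.injective)
    simp [this]

lemma tendsto_pow_mul_inv_factorial_succ (C : ℕ) :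
    Tendsto (fun n : ℕ => (C : ℝ≥0∞) ^ n * ((n + 1) ! : ℝ≥0∞)⁻¹) atTop (𝓝 0) := by
  have h := ENNReal.tendsto_ofReal (FloorSemiring.tendsto_pow_div_factorial_atTop (C : ℝ))
  rw [ENNReal.ofReal_zero] at h
  refine tendsto_of_tendsto_of_tendsto_of_le_of_le tendsto_const_nhds h (fun _ => zero_le)
    fun n => ?_
  rw [ENNReal.ofReal_div_of_pos (by positivity), ENNReal.ofReal_pow (by positivity),
    ENNReal.ofReal_natCast, ENNReal.ofReal_natCast, div_eq_mul_inv]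
  gcongr
  exact n.le_succ

variable [Countable ι]

lemma measure_not_acc_le (hmeas : ∀ i, Measurable (X i)) (hindep : iIndepFun X P)
    (hident : ∀ i j, P.map (X i) = P.map (X j)) (G : ι → ι → Prop) {C : ℕ}
    (hG : ∀ i, {j | G i j}.encard ≤ C) (a : ι) (n : ℕ) :
    P {ω | ¬Acc (fun j i => G i j ∧ X j ω < X i ω) a} ≤ C ^ n * ((n + 1) ! : ℝ≥0∞)⁻¹ :=
  calc P {ω | ¬Acc (fun j i => G i j ∧ X j ω < X i ω) a}
      ≤ P (⋃ c ∈ chainsFrom G a n, {ω | StrictAnti fun i => X (c i) ω}) := by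
        refine measure_mono fun ω hω => ?_
        obtain ⟨c, hc0, hc⟩ := exists_mem_chainsFrom_flip_of_not_acc hω n
        exact mem_biUnion ⟨hc0, fun i => (hc i).1⟩
          (Fin.strictAnti_iff_succ_lt.2 fun i => (hc i).2)
    _ ≤ ∑' c : chainsFrom G a n, P {ω | StrictAnti fun i => X (c.1 i) ω} :=
        measure_biUnion_le P (to_countable _) _
    _ ≤ ∑' _ : chainsFrom G a n, ((n + 1) ! : ℝ≥0∞)⁻¹ :=
        ENNReal.tsum_le_tsum fun c => measure_strictAnti_comp_le hmeas hindep hident c.1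
    _ ≤ C ^ n * ((n + 1) ! : ℝ≥0∞)⁻¹ := by
        rw [ENNReal.tsum_set_const]
        gcongr
        exact_mod_cast encard_chainsFrom_le hG a n

theorem ae_wellFounded_descent (hmeas : ∀ i, Measurable (X i)) (hindep : iIndepFun X P)
    (hident : ∀ i j, P.map (X i) = P.map (X j)) (G : ι → ι → Prop) {C : ℕ}
    (hG : ∀ i, {j | G i j}.encard ≤ C) :
    ∀ᵐ ω ∂P, WellFounded fun j i => G i j ∧ X j ω < X i ω := by
  have hacc : ∀ a, ∀ᵐ ω ∂P, Acc (fun j i => G i j ∧ X j ω < X i ω) a := fun a =>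
    ae_iff.2 <| le_antisymm (ge_of_tendsto' (tendsto_pow_mul_inv_factorial_succ C)
      (measure_not_acc_le hmeas hindep hident G hG a)) zero_le
  filter_upwards [ae_all_iff.2 hacc] with ω hω using ⟨hω⟩

end IIDLabels

namespace FrozenD

variable {d : ℕ}

instance : Countable (EdgeD d) := Subtype.countable

lemma vdistD_le_iff {v w : Vd d} {K : ℕ} : vdistD v w ≤ K ↔ ∀ i, (v i - w i).natAbs ≤ K := by
  simp [vdistD, Finset.sup_le_iff]

lemma vdistD_comm (v w : Vd d) : vdistD v w = vdistD w v := by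
  simp only [vdistD, ← Int.natAbs_neg (v _ - w _), neg_sub]

lemma natAbs_sub_le_vdistD (v w : Vd d) (i : Fin d) : (v i - w i).natAbs ≤ vdistD v w :=
  vdistD_le_iff.1 le_rfl i

lemma vdistD_triangle (u v w : Vd d) : vdistD u w ≤ vdistD u v + vdistD v w := by
  refine vdistD_le_iff.2 fun i => ?_
  have huv := natAbs_sub_le_vdistD u v i
  have hvw := natAbs_sub_le_vdistD v w i
  omega

lemma vdistD_fst_snd_le_one (e : EdgeD d) : vdistD e.1.1 e.1.2 ≤ 1 := by
  obtain ⟨i, hi⟩ := e.2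
  refine vdistD_le_iff.2 fun j => ?_
  rcases eq_or_ne j i with rfl | hj
  · simp [hi]
  · simp [hi, Function.update_of_ne hj]

lemma EdgeOfD.vdistD_le_one {x y : Vd d} {e : EdgeD d} (h : EdgeOfD x y e) : vdistD x y ≤ 1 := by
  rcases h with h | h
  · simpa [h] using vdistD_fst_snd_le_one e
  · simpa [h, vdistD_comm x] using vdistD_fst_snd_le_one e

lemma vdistD_le_diamD {W : Set (Vd d)} {v w : Vd d} (hv : v ∈ W) (hw : w ∈ W) :
    (vdistD v w : ℝ≥0∞) ≤ diamD W :=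
  le_iSup₂_of_le v hv (le_iSup₂_of_le w hw le_rfl)

lemma diamD_mono {W W' : Set (Vd d)} (h : W ⊆ W') : diamD W ≤ diamD W' :=
  iSup₂_le fun _ hv => iSup₂_le fun _ hw => vdistD_le_diamD (h hv) (h hw)

lemma clusterD_mono {A B : Set (EdgeD d)} (h : A ⊆ B) (v : Vd d) :
    clusterD A v ⊆ clusterD B v := by
  refine fun w hw => Relation.ReflTransGen.mono ?_ v w hw
  rintro x y ⟨e, he, hxy⟩
  exact ⟨e, h he, hxy⟩

def BallE (N : ℕ) (v : Vd d) : Set (EdgeD d) := {f | vdistD v f.1.1 ≤ N ∧ vdistD v f.1.2 ≤ N}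

lemma EdgeOfD.mem_ballE {x y : Vd d} {e : EdgeD d} (h : EdgeOfD x y e) {N : ℕ} {v : Vd d}
    (hx : vdistD v x ≤ N) (hy : vdistD v y ≤ N) : e ∈ BallE N v := by
  rcases h with h | h <;> simp [BallE, h, hx, hy]

lemma clusterD_eq_of_diamD_lt {A : Set (EdgeD d)} {v : Vd d} {N : ℕ}
    (h : diamD (clusterD (A ∩ BallE N v) v) < N) : clusterD A v = clusterD (A ∩ BallE N v) v := by
  refine Subset.antisymm (fun w (hw : ConnInD A v w) => ?_) (clusterD_mono inter_subset_left v)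
  induction hw with
  | refl => exact Relation.ReflTransGen.refl
  | @tail b c _ hbc ih =>
    obtain ⟨e, he, hbc⟩ := hbc
    have hb : vdistD v b < N := by
      exact_mod_cast (vdistD_le_diamD Relation.ReflTransGen.refl ih).trans_lt h
    have hc : vdistD v c ≤ N :=
      (vdistD_triangle v b c).trans (by have := hbc.vdistD_le_one; omega)
    exact Relation.ReflTransGen.tail ih ⟨e, ⟨he, hbc.mem_ballE hb.le hc⟩, hbc⟩

lemma diamD_clusterD_lt_iff (A : Set (EdgeD d)) (v : Vd d) (N : ℕ) :
    diamD (clusterD A v) < N ↔ diamD (clusterD (A ∩ BallE N v) v) < N :=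
  ⟨(diamD_mono (clusterD_mono inter_subset_left v)).trans_lt,
    fun h => clusterD_eq_of_diamD_lt h ▸ h⟩

lemma diamD_clusterD_lt_congr {A A' : Set (EdgeD d)} {v : Vd d} {N : ℕ}
    (h : A ∩ BallE N v = A' ∩ BallE N v) :
    diamD (clusterD A v) < N ↔ diamD (clusterD A' v) < N := by
  rw [diamD_clusterD_lt_iff A, diamD_clusterD_lt_iff A', h]

def NearD (N : ℕ) (e f : EdgeD d) : Prop := f ∈ BallE N e.1.1 ∨ f ∈ BallE N e.1.2

lemma NearD.vdistD_le {N : ℕ} {e f : EdgeD d} (h : NearD N e f) :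
    vdistD e.1.1 f.1.1 ≤ N + 1 ∧ vdistD e.1.1 f.1.2 ≤ N + 1 := by
  have he := vdistD_fst_snd_le_one e
  have h₁ := vdistD_triangle e.1.1 e.1.2 f.1.1
  have h₂ := vdistD_triangle e.1.1 e.1.2 f.1.2
  rcases h with ⟨hf₁, hf₂⟩ | ⟨hf₁, hf₂⟩ <;> omega

lemma exists_encard_nearD_le (N : ℕ) : ∃ C : ℕ, ∀ e : EdgeD d, {f | NearD N e f}.encard ≤ C := by
  let B : Set (Vd d) := univ.pi fun _ => Icc (-(N + 1 : ℤ)) (N + 1)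
  have hB : (B ×ˢ B).Finite :=
    (Finite.pi fun _ => finite_Icc _ _).prod (Finite.pi fun _ => finite_Icc _ _)
  refine ⟨hB.toFinset.card, fun e => ?_⟩
  rw [← hB.encard_eq_coe_toFinset_card]
  refine encard_le_encard_of_injOn (f := fun f : EdgeD d => (f.1.1 - e.1.1, f.1.2 - e.1.1))
    (fun f hf => ?_) fun f _ g _ hfg => ?_
  · obtain ⟨h₁, h₂⟩ := (NearD.vdistD_le hf)
    simp only [B, mem_prod, Set.mem_pi, mem_univ, mem_Icc, Pi.sub_apply, forall_const]
    exact ⟨fun i => by have := vdistD_le_iff.1 h₁ i; omega,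
      fun i => by have := vdistD_le_iff.1 h₂ i; omega⟩
  · simp only [Prod.mk.injEq, sub_left_inj] at hfg
    exact Subtype.ext (Prod.ext hfg.1 hfg.2)

def frozenRule (N : ℕ) (τ : EdgeD d → ℝ) (F : Set (EdgeD d)) (e : EdgeD d) : Prop :=
  diamD (clusterD {f ∈ F | τ f < τ e} e.1.1) < N ∧ diamD (clusterD {f ∈ F | τ f < τ e} e.1.2) < N

lemma frozenRule_congr {N : ℕ} {τ : EdgeD d → ℝ} {F F' : Set (EdgeD d)} {e : EdgeD d}
    (h : ∀ f, NearD N e f ∧ τ f < τ e → (f ∈ F ↔ f ∈ F')) :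
    frozenRule N τ F e ↔ frozenRule N τ F' e := by
  have hball : ∀ v, (∀ f ∈ BallE N v, NearD N e f) →
      {f ∈ F | τ f < τ e} ∩ BallE N v = {f ∈ F' | τ f < τ e} ∩ BallE N v := fun v hv => by
    ext f
    simp only [mem_inter_iff, mem_sep_iff]
    constructor <;> rintro ⟨⟨hF, hτ⟩, hB⟩ <;> refine ⟨⟨?_, hτ⟩, hB⟩
    exacts [(h f ⟨hv f hB, hτ⟩).1 hF, (h f ⟨hv f hB, hτ⟩).2 hF]
  exact and_congr (diamD_clusterD_lt_congr (hball e.1.1 fun _ => Or.inl))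
    (diamD_clusterD_lt_congr (hball e.1.2 fun _ => Or.inr))

theorem existsUnique_isFrozenEvolutionD_of_wellFounded {N : ℕ} {τ : EdgeD d → ℝ}
    (hwf : WellFounded fun f e => NearD N e f ∧ τ f < τ e) :
    ∃! F, IsFrozenEvolutionD N τ F :=
  hwf.existsUnique_set_of_local (frozenRule N τ) fun _ _ _ => frozenRule_congr

theorem statement7_general (d : ℕ) (N : ℕ)
    {Ω : Type} [MeasurableSpace Ω] (P : Measure Ω)
    (τ : EdgeD d → Ω → ℝ) (hmeas : ∀ e, Measurable (τ e))
    (hindep : iIndepFun τ P)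
    (hlaw : ∀ e, P.map (τ e) = MeasureTheory.volume.restrict (Set.Ioo (0:ℝ) 1)) :
    ∀ᵐ ω ∂P, ∃! F : Set (EdgeD d), IsFrozenEvolutionD N (fun e => τ e ω) F := by
  obtain ⟨C, hC⟩ := exists_encard_nearD_le (d := d) N
  filter_upwards [ae_wellFounded_descent hmeas hindep (fun e f => (hlaw e).trans (hlaw f).symm)
    (NearD N) hC] with ω hω
  exact existsUnique_isFrozenEvolutionD_of_wellFounded hω

/-- For every finite `N` and every dimension `d ≥ 1`, the `N`-parameter frozen
percolation process on `ℤ^d` exists: for almost every realization of the i.i.d. `Uniform(0,1)`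
edge labels `τ`, there is a unique assignment of opening times consistent with the frozen
percolation rule. -/
theorem statement7 (d : ℕ) (hd : 1 ≤ d) (N : ℕ)
    {Ω : Type} [MeasurableSpace Ω] (P : Measure Ω) [IsProbabilityMeasure P]
    (τ : EdgeD d → Ω → ℝ) (hmeas : ∀ e, Measurable (τ e))
    (hindep : iIndepFun τ P)
    (hlaw : ∀ e, P.map (τ e) = MeasureTheory.volume.restrict (Set.Ioo (0:ℝ) 1)) :
    ∀ᵐ ω ∂P, ∃! F : Set (EdgeD d), IsFrozenEvolutionD N (fun e => τ e ω) F :=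
  statement7_general d N P τ hmeas hindep hlaw

end FrozenD
end
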